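/- Let δ₀ ∈ S* ∩ δ with η ∈ T_{<δ₀}, and S ⊆ S* ∩ δ tenuous. Then the restriction of p*_{η,δ,S} to levels below δ₀ equals p*_{η,δ₀,S∩δ₀}: p*_{η,δ,S} ∩ T_{<δ₀} = p*_{η,δ₀,S∩δ₀}. -/

import Mathlib

open Set Ordinal

namespace RRF

/-- `C` is a closed unbounded (club) subset of the ordinal `δ`. -/
def ClubIn (C : Set Ordinal) (δ : Ordinal) : Prop :=
  (∀ α < δ, ∃ β ∈ C, α < β ∧ β < δ) ∧
  (∀ α, 0 < α → α < δ → (∀ β < α, ∃ γ ∈ C, β < γ ∧ γ < α) → α ∈ C)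

/-- `S` is stationary in `δ`: it meets every club of `δ`. -/
def StatIn (S : Set Ordinal) (δ : Ordinal) : Prop :=
  ∀ C, ClubIn C δ → (S ∩ C).Nonempty

/-- `S` is tenuous (nowhere stationary): for every ordinal `δ` of
uncountable cofinality, `S ∩ δ` is not stationary in `δ`. -/
def Tenuous (S : Set Ordinal) : Prop :=
  ∀ δ : Ordinal, Cardinal.aleph0 < δ.cof → ¬ StatIn (S ∩ Iio δ) δ

end RRF

namespace RRF

/-- A node: a padded sequence of ordinals, given by its length together with a
function which is `0` from the length onwards. -/
abbrev Node : Type 1 := Ordinal × (Ordinal → Ordinal)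

namespace Node

/-- The length of a node. -/
def lg (η : Node) : Ordinal := η.1

/-- Restriction of a node to length `β`. -/
noncomputable def restrict (η : Node) (β : Ordinal) : Node :=
  (min β η.1, fun ε => if ε < min β η.1 then η.2 ε else 0)

/-- `η ⊴ ν` : `η` is an initial segment of `ν`. -/
def Below (η ν : Node) : Prop := η.1 ≤ ν.1 ∧ ∀ ε < η.1, η.2 ε = ν.2 ε

/-- The empty sequence. -/
def emptyNode : Node := (0, fun _ => 0)

/-- `η⌢⟨j⟩` : the immediate successor of `η` with last value `j`. -/
noncomputable def ext (η : Node) (j : Ordinal) : Node :=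
  (η.1 + 1, fun ε => if ε < η.1 then η.2 ε else if ε = η.1 then j else 0)

end Node

/-- `η` is a genuine (padded) sequence with `η(ε) < θ ε` for `ε < lg η`. -/
def IsSeq (θ : Ordinal → Cardinal) (η : Node) : Prop :=
  (∀ ε < η.1, η.2 ε < (θ ε).ord) ∧ ∀ ε, ¬ ε < η.1 → η.2 ε = 0

/-- `T_{<δ}` : the full tree of sequences of length `< δ`. -/
def Ttree (θ : Ordinal → Cardinal) (δ : Ordinal) : Set Node :=
  {η | η.1 < δ ∧ IsSeq θ η}

/-- `T_ε` : the `ε`-th level of the full tree. -/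
def Level (θ : Ordinal → Cardinal) (ε : Ordinal) : Set Node :=
  {η | η.1 = ε ∧ IsSeq θ η}

/-- `lim_δ(u)` : length-`δ` sequences all of whose proper restrictions lie in `u`. -/
def limNodes (θ : Ordinal → Cardinal) (δ : Ordinal) (u : Set Node) : Set Node :=
  {ν | ν.1 = δ ∧ IsSeq θ ν ∧ ∀ β < δ, ν.restrict β ∈ u}

end RRF

namespace RRF

/-- `p^{[η]}` : the nodes of `p` comparable with `η` which extend `η` or are
initial segments of it. -/
def restrTree (p : Set Node) (η : Node) : Set Node :=
  {ρ ∈ p | Node.Below η ρ ∨ Node.Below ρ η}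

/-- `η` is the trunk of `p` : it is comparable with every node of `p` and is
`⊴`-maximal with this property. -/
def IsTrunk (p : Set Node) (η : Node) : Prop :=
  η ∈ p ∧ (∀ ν ∈ p, Node.Below ν η ∨ Node.Below η ν) ∧
    ∀ η' ∈ p, (∀ ν ∈ p, Node.Below ν η' ∨ Node.Below η' ν) → Node.Below η' η

/-- `p` is a tree: nonempty and closed under restrictions. -/
def IsTree (p : Set Node) : Prop :=
  p.Nonempty ∧ ∀ η ∈ p, ∀ β ≤ η.1, η.restrict β ∈ p

/-- `S_p` : the set of pruning levels of `p` below `δ` — limit levels `δ₁ < δ`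
at which some node has all proper restrictions in `p` but is itself not in `p`. -/
def pruneSet (θ : Ordinal → Cardinal) (δ : Ordinal) (p : Set Node) : Set Ordinal :=
  {δ₁ | δ₁ < δ ∧ Order.IsSuccLimit δ₁ ∧ ∃ η ∈ Level θ δ₁, η ∉ p ∧ ∀ β < δ₁, η.restrict β ∈ p}

/-- `p` is a condition of the forcing `Q⁰_δ`. -/
structure IsCond0 (θ : Ordinal → Cardinal) (Sstar : Set Ordinal) (δ : Ordinal)
    (p : Set Node) : Prop where
  subset : p ⊆ Ttree θ δ
  tree : IsTree p
  trunk : ∃ η, IsTrunk p η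
  levels : ∀ η ∈ p, ∀ β, η.1 ≤ β → β < δ → ∃ ν ∈ p, ν.1 = β ∧ Node.Below η ν
  branches : ∀ η ∈ p, ∃ ν ∈ limNodes θ δ p, Node.Below η ν
  fullSucc : ∀ t, IsTrunk p t → ∀ η ∈ p, Node.Below t η →
      ∀ j < ((θ η.1).ord), η.ext j ∈ p
  pruneSub : pruneSet θ δ p ⊆ Sstar
  pruneTen : Tenuous (pruneSet θ δ p)
  pruneGt : ∀ t, IsTrunk p t → ∀ δ₁ ∈ pruneSet θ δ p, t.1 < δ₁

/-- Compatibility in `Q⁰_δ` (order is reverse inclusion). -/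
def Compat0 (θ : Ordinal → Cardinal) (Sstar : Set Ordinal) (δ : Ordinal)
    (p q : Set Node) : Prop :=
  ∃ r, IsCond0 θ Sstar δ r ∧ r ⊆ p ∧ r ⊆ q

/-- Membership in `Ξ_δ` for a family `⟨q_η : η ∈ Λ⟩`. -/
structure IsXi (θ : Ordinal → Cardinal) (Sstar : Set Ordinal) (δ : Ordinal)
    (Λ : Set Node) (q : Node → Set Node) : Prop where
  sub : Λ ⊆ Ttree θ δ
  cond : ∀ η ∈ Λ, IsCond0 θ Sstar δ (q η)
  trunk : ∀ η ∈ Λ, IsTrunk (q η) η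
  anti : ∀ η ∈ Λ, ∀ ν ∈ Λ, η ≠ ν → η ∉ q ν ∨ ν ∉ q η
  union : IsCond0 θ Sstar δ (⋃ η ∈ Λ, q η)

/-- The coder of `⟨q_η : η ∈ Λ⟩`. -/
def coder (Λ : Set Node) (q : Node → Set Node) : Set (Node × Node) :=
  {x | x.1 ∈ Λ ∧ x.2 ∈ q x.1}

end RRF

namespace RRF

-- The recursively defined condition `p*_{η,δ,S}`, relative to abstract
-- "successful level" data `succl`, `rst` (= `r*_δ`), `Λst` (= `Λ*_δ`) and
-- `qst` (= `⟨q*_{δ,η'}⟩`).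
open Classical in
noncomputable def pstar (θ : Ordinal → Cardinal) (succl : Ordinal → Prop)
    (rst : Ordinal → Set Node) (Λst : Ordinal → Set Node)
    (qst : Ordinal → Node → Set Node) :
    Ordinal → Node → Set Ordinal → Set Node :=
  WellFounded.fix (wellFounded_lt)
    (fun δ rec η S =>
      if sSup S ≤ η.1 then
        -- case (a): `(T_{<δ})^{[η]}`
        restrTree (Ttree θ δ) η
      else if _hmem : sSup S ∈ S then
        if hlt : sSup S < δ then
          if succl (sSup S) then
            -- case (d): last element `δ₁ = sSup S` is successful
            {ν ∈ Ttree θ δ |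
              (ν.1 < sSup S ∧ ν ∈ rec (sSup S) hlt η (S ∩ Set.Iio (sSup S))) ∨
              (sSup S ≤ ν.1 ∧
                ν.restrict (sSup S) ∈
                  limNodes θ (sSup S) (rec (sSup S) hlt η (S ∩ Set.Iio (sSup S))) ∧
                (ν.restrict (sSup S) ∈ limNodes θ (sSup S) (rst (sSup S)) →
                  ∃ η' ∈ Λst (sSup S),
                    ν.restrict (sSup S) ∈ limNodes θ (sSup S) (qst (sSup S) η')))}
          else
            -- case (c): last element `δ₁ = sSup S` is not successful
            {ν ∈ Ttree θ δ |
              (ν.1 < sSup S ∧ ν ∈ rec (sSup S) hlt η (S ∩ Set.Iio (sSup S))) ∨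
              (sSup S ≤ ν.1 ∧
                ν.restrict (sSup S) ∈
                  limNodes θ (sSup S) (rec (sSup S) hlt η (S ∩ Set.Iio (sSup S))))}
        else ∅
      else
        -- case (b): `S` unbounded above `lg η` with no last element
        {ν ∈ Ttree θ δ |
          Node.Below ν η ∨
          (Node.Below η ν ∧
            ((∃ δ₁, ∃ h : δ₁ < δ, δ₁ ∈ S ∧ ν.1 < δ₁ ∧
                ν ∈ rec δ₁ h η (S ∩ Set.Iio δ₁)) ∨
             (sSup S ≤ ν.1 ∧ ∀ δ₁, ∀ h : δ₁ < δ, δ₁ ∈ S → η.1 < δ₁ →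
                ∀ ζ < δ₁, ν.restrict ζ ∈ rec δ₁ h η (S ∩ Set.Iio δ₁))))})

/-- Membership in the main forcing `Q_δ`. -/
def IsCondQ (θ : Ordinal → Cardinal) (succl : Ordinal → Prop)
    (rst Λst : Ordinal → Set Node) (qst : Ordinal → Node → Set Node)
    (Sstar : Set Ordinal) (δ : Ordinal) (p : Set Node) : Prop :=
  ∃ η ∈ Ttree θ δ, ∃ S, S ⊆ Sstar ∩ Set.Iio δ ∧ Tenuous S ∧
    p = pstar θ succl rst Λst qst δ η S

/-- Membership in the forcing `Q'_δ`. -/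
def IsCondQ' (θ : Ordinal → Cardinal) (succl : Ordinal → Prop)
    (rst Λst : Ordinal → Set Node) (qst : Ordinal → Node → Set Node)
    (Sstar : Set Ordinal) (δ : Ordinal) (p : Set Node) : Prop :=
  IsCond0 θ Sstar δ p ∧
  ∀ δ₁ ∈ Sstar, δ₁ < δ → (∀ t, IsTrunk p t → t.1 < δ₁) →
    IsCondQ θ succl rst Λst qst Sstar δ₁ (p ∩ Ttree θ δ₁)

end RRF

/-!
Every clause of the recursion defining `p*_{η,δ,S}` decides whether a node `ν` belongs to it from
`lg ν`, `η` and the earlier stages `p*_{η,δ₁,S∩δ₁}`, `δ₁ ∈ S`; the height `δ` itself only enters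
through the requirement `ν ∈ T_{<δ}`. Hence if `S ⊆ δ₀`, cutting at `δ₀` merely replaces `T_{<δ}`
by `T_{<δ₀}`. Otherwise some `δ₁ ∈ S` lies above `δ₀`, so a node of length `< δ₀` is in
`p*_{η,δ,S}` iff it is in the earlier stages, and by induction on `δ` all of these agree with
`p*_{η,δ₀,S∩δ₀}` below their common height.
-/

namespace RRF

namespace Node

theorem Below.trans {ρ η ν : Node} (h₁ : ρ.Below η) (h₂ : η.Below ν) : ρ.Below ν :=
  ⟨h₁.1.trans h₂.1, fun ε hε => (h₁.2 ε hε).trans (h₂.2 ε (hε.trans_le h₁.1))⟩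

theorem restrict_below (ν : Node) (β : Ordinal) : (ν.restrict β).Below ν :=
  ⟨min_le_right _ _, fun _ hε => if_pos hε⟩

theorem restrict_restrict (ν : Node) {β σ : Ordinal} (h : β ≤ σ) :
    (ν.restrict σ).restrict β = ν.restrict β := by
  have hmin : min β (min σ ν.1) = min β ν.1 := by
    rw [← min_assoc, min_eq_left h]
  simp only [restrict, hmin]
  congr 1
  funext ε
  by_cases hε : ε < min β ν.1
  · have hεσ : ε < min σ ν.1 :=
      lt_min ((hε.trans_le (min_le_left _ _)).trans_le h) (hε.trans_le (min_le_right _ _))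
    rw [if_pos hε, if_pos hε, if_pos hεσ]
  · rw [if_neg hε, if_neg hε]

theorem below_of_comparable_of_le {ρ η : Node} (h : ρ.Below η ∨ η.Below ρ) (hlen : η.1 ≤ ρ.1) :
    η.Below ρ := by
  rcases h with h | h
  · exact ⟨hlen, fun ε hε => (h.2 ε (hε.trans_le hlen)).symm⟩
  · exact h

theorem below_of_comparable_restrict {η ν : Node} (hlen : η.1 ≤ ν.1)
    (h : (ν.restrict η.1).Below η ∨ η.Below (ν.restrict η.1)) : η.Below ν :=
  (below_of_comparable_of_le h (min_eq_left hlen).ge).trans (ν.restrict_below _)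

end Node

theorem Ttree_mono (θ : Ordinal → Cardinal) {δ₀ δ : Ordinal} (h : δ₀ ≤ δ) :
    Ttree θ δ₀ ⊆ Ttree θ δ :=
  fun _ hν => ⟨hν.1.trans_le h, hν.2⟩

theorem sep_Ttree_inter_Ttree (θ : Ordinal → Cardinal) {δ₀ δ : Ordinal} (h : δ₀ ≤ δ)
    (P : Node → Prop) : {ν ∈ Ttree θ δ | P ν} ∩ Ttree θ δ₀ = {ν ∈ Ttree θ δ₀ | P ν} := by
  ext ν
  exact ⟨fun ⟨⟨_, hP⟩, hν⟩ => ⟨hν, hP⟩, fun ⟨hν, hP⟩ => ⟨⟨Ttree_mono θ h hν, hP⟩, hν⟩⟩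

section pstar

variable {θ : Ordinal → Cardinal} {succl : Ordinal → Prop} {rst Λst : Ordinal → Set Node}
  {qst : Ordinal → Node → Set Node} {δ : Ordinal} {η : Node} {S : Set Ordinal}

local notation "p⋆" => pstar θ succl rst Λst qst

theorem pstar_of_sSup_le (h : sSup S ≤ η.1) : p⋆ δ η S = restrTree (Ttree θ δ) η := by
  rw [pstar, WellFounded.fix_eq, if_pos h]

theorem pstar_of_sSup_mem (h₁ : η.1 < sSup S) (h₂ : sSup S ∈ S) (h₃ : sSup S < δ) :
    p⋆ δ η S =
      {ν ∈ Ttree θ δ |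
        (ν.1 < sSup S ∧ ν ∈ p⋆ (sSup S) η (S ∩ Iio (sSup S))) ∨
        (sSup S ≤ ν.1 ∧
          ν.restrict (sSup S) ∈ limNodes θ (sSup S) (p⋆ (sSup S) η (S ∩ Iio (sSup S))) ∧
          (succl (sSup S) → ν.restrict (sSup S) ∈ limNodes θ (sSup S) (rst (sSup S)) →
            ∃ η' ∈ Λst (sSup S), ν.restrict (sSup S) ∈ limNodes θ (sSup S) (qst (sSup S) η')))} := by
  rw [pstar, WellFounded.fix_eq, if_neg h₁.not_ge, dif_pos h₂, dif_pos h₃]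
  by_cases hs : succl (sSup S) <;> simp only [hs, if_true, if_false, true_imp_iff,
    false_imp_iff, and_true]

theorem pstar_of_sSup_notMem (h₁ : η.1 < sSup S) (h₂ : sSup S ∉ S) (hS : S ⊆ Iio δ) :
    p⋆ δ η S =
      {ν ∈ Ttree θ δ |
        ν.Below η ∨
        (η.Below ν ∧
          ((∃ δ₁ ∈ S, ν.1 < δ₁ ∧ ν ∈ p⋆ δ₁ η (S ∩ Iio δ₁)) ∨
           (sSup S ≤ ν.1 ∧ ∀ δ₁ ∈ S, η.1 < δ₁ →
              ∀ ζ < δ₁, ν.restrict ζ ∈ p⋆ δ₁ η (S ∩ Iio δ₁))))} := by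
  rw [pstar, WellFounded.fix_eq, if_neg h₁.not_ge, dif_neg h₂]
  ext ν
  refine and_congr_right fun _ => or_congr_right <| and_congr_right fun _ => or_congr ?_ ?_
  · exact ⟨fun ⟨δ₁, _, h⟩ => ⟨δ₁, h⟩, fun ⟨δ₁, h⟩ => ⟨δ₁, hS h.1, h⟩⟩
  · exact and_congr_right fun _ => ⟨fun h δ₁ h₁ => h δ₁ (hS h₁) h₁, fun h δ₁ _ => h δ₁⟩

theorem pstar_subset_restrTree : p⋆ δ η S ⊆ restrTree (Ttree θ δ) η := by
  intro ν hν
  induction δ using WellFoundedLT.induction generalizing S ν with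
  | ind δ IH =>
  rcases le_or_gt (sSup S) η.1 with ha | h₁
  · rwa [pstar_of_sSup_le ha] at hν
  by_cases h₂ : sSup S ∈ S
  · by_cases h₃ : sSup S < δ
    · rw [pstar_of_sSup_mem h₁ h₂ h₃] at hν
      refine ⟨hν.1, ?_⟩
      rcases hν.2 with ⟨-, hm⟩ | ⟨hge, hlim, -⟩
      · exact (IH _ h₃ hm).2
      · refine Or.inl (Node.below_of_comparable_restrict (h₁.le.trans hge) ?_)
        rw [← ν.restrict_restrict h₁.le]
        exact (IH _ h₃ (hlim.2.2 _ h₁)).2.symm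
    · rw [pstar, WellFounded.fix_eq, if_neg h₁.not_ge, dif_pos h₂, dif_neg h₃] at hν
      exact absurd hν (notMem_empty ν)
  · rw [pstar, WellFounded.fix_eq, if_neg h₁.not_ge, dif_neg h₂] at hν
    exact ⟨hν.1, hν.2.symm.imp_left And.left⟩

theorem mem_pstar_of_below {ν : Node} (hS : S ⊆ Iio δ) (hν : ν ∈ Ttree θ δ) (hνη : ν.Below η) :
    ν ∈ p⋆ δ η S := by
  induction δ using WellFoundedLT.induction generalizing S with
  | ind δ IH =>
  rcases le_or_gt (sSup S) η.1 with ha | h₁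
  · rw [pstar_of_sSup_le ha]
    exact ⟨hν, Or.inr hνη⟩
  by_cases h₂ : sSup S ∈ S
  · have hνσ : ν.1 < sSup S := hνη.1.trans_lt h₁
    rw [pstar_of_sSup_mem h₁ h₂ (hS h₂)]
    exact ⟨hν, Or.inl ⟨hνσ, IH _ (hS h₂) inter_subset_right ⟨hνσ, hν.2⟩⟩⟩
  · rw [pstar_of_sSup_notMem h₁ h₂ hS]
    exact ⟨hν, Or.inl hνη⟩

theorem pstar_inter_Ttree_of_subset {δ₀ : Ordinal} (hS : S ⊆ Iio δ₀) (h : δ₀ ≤ δ) :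
    p⋆ δ η S ∩ Ttree θ δ₀ = p⋆ δ₀ η S := by
  rcases le_or_gt (sSup S) η.1 with ha | h₁
  · rw [pstar_of_sSup_le ha, pstar_of_sSup_le ha]
    exact sep_Ttree_inter_Ttree θ h _
  by_cases h₂ : sSup S ∈ S
  · rw [pstar_of_sSup_mem h₁ h₂ (hS h₂), pstar_of_sSup_mem h₁ h₂ ((hS h₂).trans_le h)]
    exact sep_Ttree_inter_Ttree θ h _
  · rw [pstar_of_sSup_notMem h₁ h₂ hS, pstar_of_sSup_notMem h₁ h₂ (hS.trans (Iio_subset_Iio h))]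
    exact sep_Ttree_inter_Ttree θ h _

theorem pstar_inter_Ttree_of_coherent {δ₀ δ₁ : Ordinal} (hδ : δ₀ < δ) (hη : η.1 < δ₀)
    (hS : S ⊆ Iio δ) (hδ₁ : δ₁ ∈ S) (hδ₀δ₁ : δ₀ ≤ δ₁)
    (coherent : ∀ σ ∈ S, η.1 < σ → ∀ ν ∈ Ttree θ δ₀, ν.1 < σ →
      (ν ∈ p⋆ σ η (S ∩ Iio σ) ↔ ν ∈ p⋆ δ₀ η (S ∩ Iio δ₀))) :
    p⋆ δ η S ∩ Ttree θ δ₀ = p⋆ δ₀ η (S ∩ Iio δ₀) := by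
  have hδ₀σ : δ₀ ≤ sSup S := hδ₀δ₁.trans (le_csSup ⟨δ, fun x hx => (hS hx).le⟩ hδ₁)
  have hησ : η.1 < sSup S := hη.trans_le hδ₀σ
  ext ν
  by_cases h₂ : sSup S ∈ S
  · rw [pstar_of_sSup_mem hησ h₂ (hS h₂)]
    constructor
    · rintro ⟨⟨-, ⟨hνσ, hmem⟩ | ⟨hge, -⟩⟩, hν⟩
      · exact (coherent _ h₂ hησ ν hν hνσ).1 hmem
      · exact absurd (hν.1.trans_le hδ₀σ) hge.not_gt
    · intro hmem
      have hν := (pstar_subset_restrTree hmem).1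
      have hνσ : ν.1 < sSup S := hν.1.trans_le hδ₀σ
      exact ⟨⟨Ttree_mono θ hδ.le hν, Or.inl ⟨hνσ, (coherent _ h₂ hησ ν hν hνσ).2 hmem⟩⟩, hν⟩
  · rw [pstar_of_sSup_notMem hησ h₂ hS]
    constructor
    · rintro ⟨⟨-, hνη | ⟨hην, ⟨σ, hσS, hνσ, hmem⟩ | ⟨hge, -⟩⟩⟩, hν⟩
      · exact mem_pstar_of_below inter_subset_right hν hνη
      · exact (coherent σ hσS (hην.1.trans_lt hνσ) ν hν hνσ).1 hmem
      · exact absurd (hν.1.trans_le hδ₀σ) hge.not_gt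
    · intro hmem
      obtain ⟨hν, hcomp⟩ := pstar_subset_restrTree hmem
      refine ⟨⟨Ttree_mono θ hδ.le hν, ?_⟩, hν⟩
      rcases hcomp with hην | hνη
      · have hνδ₁ : ν.1 < δ₁ := hν.1.trans_le hδ₀δ₁
        exact Or.inr ⟨hην, Or.inl ⟨δ₁, hδ₁, hνδ₁,
          (coherent δ₁ hδ₁ (hη.trans_le hδ₀δ₁) ν hν hνδ₁).2 hmem⟩⟩
      · exact Or.inl hνη

theorem pstar_inter_Ttree {δ₀ : Ordinal} (hδ : δ₀ < δ) (hη : η.1 < δ₀) (hS : S ⊆ Iio δ) :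
    p⋆ δ η S ∩ Ttree θ δ₀ = p⋆ δ₀ η (S ∩ Iio δ₀) := by
  induction δ using WellFoundedLT.induction generalizing δ₀ S with
  | ind δ IH =>
  by_cases hsub : S ⊆ Iio δ₀
  · rw [inter_eq_left.mpr hsub]
    exact pstar_inter_Ttree_of_subset hsub hδ.le
  obtain ⟨δ₁, hδ₁, hδ₀δ₁⟩ := not_subset.mp hsub
  have hcut : ∀ σ < δ, ∀ τ < σ, η.1 < τ →
      p⋆ σ η (S ∩ Iio σ) ∩ Ttree θ τ = p⋆ τ η (S ∩ Iio τ) := fun σ hσ τ hτσ hητ => by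
    rw [IH σ hσ hτσ hητ inter_subset_right, inter_assoc, Iio_inter_Iio, min_eq_right hτσ.le]
  refine pstar_inter_Ttree_of_coherent hδ hη hS hδ₁ (not_lt.mp hδ₀δ₁)
    fun σ hσS hησ ν hν hνσ => ?_
  rcases lt_trichotomy σ δ₀ with hσδ₀ | rfl | hδ₀σ
  · rw [← hcut δ₀ hδ σ hσδ₀ hησ]
    exact and_iff_left (show ν ∈ Ttree θ σ from ⟨hνσ, hν.2⟩)
  · rfl
  · rw [← hcut σ (hS hσS) δ₀ hδ₀σ hη]
    exact (and_iff_left hν).symm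

end pstar

theorem stmt13_general
    (θ : Ordinal → Cardinal)
    (Sstar : Set Ordinal)
    (succl : Ordinal → Prop) (rst Λst : Ordinal → Set Node)
    (qst : Ordinal → Node → Set Node)
    (δ : Ordinal)
    (δ₀ : Ordinal) (hlt : δ₀ < δ)
    (η : Node) (hη : η ∈ Ttree θ δ₀)
    (S : Set Ordinal) (hS : S ⊆ Sstar ∩ Set.Iio δ) :
    pstar θ succl rst Λst qst δ η S ∩ Ttree θ δ₀ =
      pstar θ succl rst Λst qst δ₀ η (S ∩ Set.Iio δ₀) :=
  pstar_inter_Ttree hlt hη.1 fun _ hx => (hS hx).2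

/-- for `δ₀ ∈ S* ∩ δ` with `η ∈ T_{<δ₀}` and tenuous
`S ⊆ S* ∩ δ`, one has `p*_{η,δ,S} ∩ T_{<δ₀} = p*_{η,δ₀,S∩δ₀}`. -/
theorem stmt13 (lamc : Cardinal) (hinacc : lamc.IsInaccessible)
    (θ : Ordinal → Cardinal) (hθ : ∀ ε, 2 ≤ θ ε)
    (hθlt : ∀ ε < lamc.ord, (θ ε).ord < lamc.ord)
    (Sstar : Set Ordinal) (hSsub : Sstar ⊆ Set.Iio lamc.ord)
    (hSstat : StatIn Sstar lamc.ord)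
    (hSsl : ∀ δ ∈ Sstar, (Ordinal.card δ).IsStrongLimit ∧ (Ordinal.card δ).ord = δ)
    (hSθ : ∀ δ ∈ Sstar, ∀ ζ < δ, (θ ζ).ord < δ)
    (hrefl : ∀ ε < lamc.ord, StatIn (Sstar ∩ Set.Iio ε) ε →
      (Ordinal.card ε).IsInaccessible)
    (succl : Ordinal → Prop) (rst Λst : Ordinal → Set Node)
    (qst : Ordinal → Node → Set Node)
    (hsucc : ∀ δ₁, succl δ₁ → IsXi θ Sstar δ₁ (Λst δ₁) (qst δ₁) ∧
      rst δ₁ = ⋃ η ∈ Λst δ₁, qst δ₁ η)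
    (δ : Ordinal) (hδ : δ ∈ Sstar ∨ δ = lamc.ord)
    (δ₀ : Ordinal) (hδ₀ : δ₀ ∈ Sstar) (hlt : δ₀ < δ)
    (η : Node) (hη : η ∈ Ttree θ δ₀)
    (S : Set Ordinal) (hS : S ⊆ Sstar ∩ Set.Iio δ) (hten : Tenuous S) :
    pstar θ succl rst Λst qst δ η S ∩ Ttree θ δ₀ =
      pstar θ succl rst Λst qst δ₀ η (S ∩ Set.Iio δ₀) :=
  stmt13_general θ Sstar succl rst Λst qst δ δ₀ hlt η hη S hS

end RRF
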